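/- Let n ≥ 1 and let β ∈ C₀^∞((0,∞)) with 0 ≤ β ≤ 1 and supp β ⊂ [1/2,2]. Set b(ξ,t) := sin((√3/2)|ξ|t)/((√3/2)|ξ|) and, for j ∈ {−2,−1,0,1,2} and t, τ ≥ 0, define Z_j(t,τ)g(x) := ∫_{ℝⁿ} e^{ix·ξ} e^{−|ξ|(t+τ)/2} b(ξ,t) b(ξ,τ) ĝ(ξ) β(|ξ|/2^j)² dξ. Then for every integer k > n/2 there exists a constant C_k > 0 such that for all j ∈ {−2,…,2}, all t, τ ≥ 0, and all g ∈ L¹(ℝⁿ): ‖Z_j(t,τ)g‖_{H^k(ℝⁿ)} ≤ C_k e^{−(t+τ)/16}‖g‖_{L¹(ℝⁿ)}. Consequently, for every σ > 0 there exists C_σ > 0 with ‖Z_j(t,τ)g‖_{L^∞(ℝⁿ)} ≤ C_σ(1+|t−τ|)^{−σ}‖g‖_{L¹(ℝⁿ)} for all such j, t, τ, g. -/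

import Mathlib

noncomputable section

open MeasureTheory Set
open scoped ENNReal

abbrev Eu (n : ℕ) : Type := EuclideanSpace ℝ (Fin n)

/-- Fourier transform with the convention `f̂(ξ) = ∫ e^{-i x·ξ} f(x) dx`. -/
def FT {n : ℕ} (f : Eu n → ℂ) (ξ : Eu n) : ℂ :=
  ∫ x : Eu n, Complex.exp (-Complex.I * ((inner ℝ x ξ : ℝ) : ℂ)) * f x

/-- Inverse Fourier transform, `(2π)^{-n} ∫ e^{i x·ξ} f(ξ) dξ`. -/
def invFT {n : ℕ} (f : Eu n → ℂ) (x : Eu n) : ℂ :=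
  ((((2 * Real.pi) ^ n)⁻¹ : ℝ) : ℂ) *
    ∫ ξ : Eu n, Complex.exp (Complex.I * ((inner ℝ x ξ : ℝ) : ℂ)) * f ξ

/-- Square of the inhomogeneous Sobolev norm `‖f‖²_{H^s}`. -/
def sobNormSq (n : ℕ) (s : ℝ) (f : Eu n → ℂ) : ℝ :=
  ((2 * Real.pi) ^ n)⁻¹ * ∫ ξ : Eu n, (1 + ‖ξ‖ ^ 2) ^ s * ‖FT f ξ‖ ^ 2

def sobNorm (n : ℕ) (s : ℝ) (f : Eu n → ℂ) : ℝ := Real.sqrt (sobNormSq n s f)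

/-- Membership in the Sobolev space `H^s(ℝⁿ)`. -/
def MemSob (n : ℕ) (s : ℝ) (f : Eu n → ℂ) : Prop :=
  Integrable fun ξ : Eu n => (1 + ‖ξ‖ ^ 2) ^ s * ‖FT f ξ‖ ^ 2

/-- Square of the homogeneous Sobolev norm `‖f‖²_{Ḣ^s}`. -/
def homSobNormSq (n : ℕ) (s : ℝ) (f : Eu n → ℂ) : ℝ :=
  ((2 * Real.pi) ^ n)⁻¹ * ∫ ξ : Eu n, ‖ξ‖ ^ (2 * s) * ‖FT f ξ‖ ^ 2

def homSobNorm (n : ℕ) (s : ℝ) (f : Eu n → ℂ) : ℝ := Real.sqrt (homSobNormSq n s f)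

/-- Membership in the homogeneous Sobolev space `Ḣ^s(ℝⁿ)`. -/
def MemHomSob (n : ℕ) (s : ℝ) (f : Eu n → ℂ) : Prop :=
  Integrable fun ξ : Eu n => ‖ξ‖ ^ (2 * s) * ‖FT f ξ‖ ^ 2

/-- The symbol `e^{-rt/2}(cos((√3/2)rt) + (1/√3) sin((√3/2)rt))` of the cosine-type
viscous wave propagator. -/
def symbCos (r t : ℝ) : ℝ :=
  Real.exp (-(r * t) / 2) *
    (Real.cos (Real.sqrt 3 / 2 * r * t) + 1 / Real.sqrt 3 * Real.sin (Real.sqrt 3 / 2 * r * t))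

/-- The symbol `e^{-rt/2} sin((√3/2)rt)/((√3/2)r)` of the sine-type viscous wave propagator. -/
def symbSin (r t : ℝ) : ℝ :=
  Real.exp (-(r * t) / 2) * (Real.sin (Real.sqrt 3 / 2 * r * t) / (Real.sqrt 3 / 2 * r))

/-- Free evolution of data `(f, g)` under the linear viscous wave equation
`∂ₜₜu − Δu + √(−Δ)∂ₜu = 0`. -/
def freeEv {n : ℕ} (f g : Eu n → ℂ) (t : ℝ) (x : Eu n) : ℂ :=
  invFT (fun ξ => (symbCos ‖ξ‖ t : ℂ) * FT f ξ + (symbSin ‖ξ‖ t : ℂ) * FT g ξ) x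

/-- The propagator `S(t)`, the Fourier multiplier with symbol
`e^{−|ξ|t/2}·sin((√3/2)|ξ|t)/((√3/2)|ξ|)`. -/
def Sprop {n : ℕ} (t : ℝ) (φ : Eu n → ℂ) : Eu n → ℂ :=
  invFT fun ξ => (symbSin ‖ξ‖ t : ℂ) * FT φ ξ

/-- The Duhamel solution `u(t,·) = ∫₀^t S(t−τ)F(τ,·) dτ` of the inhomogeneous linear viscous
wave equation with zero initial data. -/
def duhamel {n : ℕ} (F : ℝ → Eu n → ℂ) (t : ℝ) (x : Eu n) : ℂ :=
  ∫ τ in (0:ℝ)..t, Sprop (t - τ) (F τ) x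

/-- Time derivative `∂ₜu`. -/
def tderiv {n : ℕ} (u : ℝ → Eu n → ℂ) (t : ℝ) (x : Eu n) : ℂ := deriv (fun τ => u τ x) t

/-- Mixed `L^q_t L^r_x` norm over a time set `s`. -/
def eLqLr {n : ℕ} (q r : ℝ≥0∞) (s : Set ℝ) (u : ℝ → Eu n → ℂ) : ℝ≥0∞ :=
  if q = ∞ then essSup (fun t => eLpNorm (u t) r volume) (volume.restrict s)
  else (∫⁻ t in s, eLpNorm (u t) r volume ^ q.toReal) ^ (1 / q.toReal)

/-- Partial derivative in the `i`-th coordinate direction. -/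
def pd {n : ℕ} (i : Fin n) (f : Eu n → ℂ) (x : Eu n) : ℂ :=
  fderiv ℝ f x (EuclideanSpace.single i (1:ℝ))

/-- Spatial Laplacian. -/
def lap {n : ℕ} (f : Eu n → ℂ) (x : Eu n) : ℂ := ∑ i : Fin n, pd i (fun y => pd i f y) x

/-- `√(−Δ)`, the Fourier multiplier with symbol `|ξ|`. -/
def sqrtLap {n : ℕ} (f : Eu n → ℂ) : Eu n → ℂ :=
  invFT fun ξ => (‖ξ‖ : ℂ) * FT f ξ

/-- `u ∈ C⁰([0,T]; H^s(ℝⁿ))`: membership in `H^s` at each time together with continuity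
in the `H^s` norm. -/
def ContSob (n : ℕ) (s : ℝ) (T : ℝ) (u : ℝ → Eu n → ℂ) : Prop :=
  (∀ t ∈ Icc (0:ℝ) T, MemSob n s (u t)) ∧
  ∀ t₀ ∈ Icc (0:ℝ) T, ∀ ε > 0, ∃ δ > 0, ∀ t ∈ Icc (0:ℝ) T,
    |t - t₀| < δ → sobNorm n s (fun x => u t x - u t₀ x) < ε

/-- `b(ξ,t) = sin((√3/2)|ξ|t)/((√3/2)|ξ|)` as a function of `r = |ξ|`. -/
def bFun (r t : ℝ) : ℝ := Real.sin (Real.sqrt 3 / 2 * r * t) / (Real.sqrt 3 / 2 * r)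

/-- The frequency-localized operator `Z_j(t,τ) = V^{(j)}(t)(V^{(j)})^*(τ)`. -/
def Zop {n : ℕ} (β : ℝ → ℝ) (j : ℤ) (t τ : ℝ) (g : Eu n → ℂ) (x : Eu n) : ℂ :=
  ∫ ξ : Eu n, Complex.exp (Complex.I * ((inner ℝ x ξ : ℝ) : ℂ)) *
    ((Real.exp (-(‖ξ‖ * (t + τ)) / 2) * bFun ‖ξ‖ t * bFun ‖ξ‖ τ
        * β (‖ξ‖ / 2 ^ j) ^ 2 : ℝ) : ℂ) * FT g ξ


section AuxZop

open scoped FourierTransform RealInnerProductSpace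
open Filter

variable {n : ℕ}

lemma FT_eq_fourierIntegral (f : Eu n → ℂ) (ξ : Eu n) :
    FT f ξ = 𝓕 f ((2 * Real.pi)⁻¹ • ξ) := by
  rw [Real.fourier_eq', FT]
  congr 1
  funext x
  rw [real_inner_smul_right, smul_eq_mul]
  have h2π : (2 * Real.pi) ≠ 0 := by positivity
  have harg : -2 * Real.pi * ((2 * Real.pi)⁻¹ * (inner ℝ x ξ : ℝ)) = -(inner ℝ x ξ : ℝ) := by
    field_simp
  rw [harg]
  congr 1
  push_cast
  ring

lemma norm_FT_le (g : Eu n → ℂ) (ξ : Eu n) : ‖FT g ξ‖ ≤ ∫ x, ‖g x‖ := by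
  refine le_trans (norm_integral_le_integral_norm _) (le_of_eq ?_)
  congr 1
  funext x
  rw [norm_mul]
  simp [Complex.norm_exp]

lemma continuous_FT {g : Eu n → ℂ} (hg : Integrable g) : Continuous (FT g) := by
  have h1 : Continuous (𝓕 g) :=
    VectorFourier.fourierIntegral_continuous Real.continuous_fourierChar continuous_inner hg
  have h2 : FT g = fun ξ => 𝓕 g ((2 * Real.pi)⁻¹ • ξ) := funext fun ξ => FT_eq_fourierIntegral g ξ
  rw [h2]
  exact h1.comp (continuous_const_smul _)

/-- The real symbol of `Zop` as a function of `r = ‖ξ‖`. -/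
def msym (β : ℝ → ℝ) (j : ℤ) (t τ : ℝ) (r : ℝ) : ℝ :=
  Real.exp (-(r * (t + τ)) / 2) * bFun r t * bFun r τ * β (r / 2 ^ j) ^ 2

/-- The full (complex) integrand symbol of `Zop`. -/
def hsym {n : ℕ} (β : ℝ → ℝ) (j : ℤ) (t τ : ℝ) (g : Eu n → ℂ) (ξ : Eu n) : ℂ :=
  ((msym β j t τ ‖ξ‖ : ℝ) : ℂ) * FT g ξ

lemma Zop_eq (β : ℝ → ℝ) (j : ℤ) (t τ : ℝ) (g : Eu n → ℂ) (x : Eu n) :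
    Zop β j t τ g x
      = ∫ ξ : Eu n, Complex.exp (Complex.I * ((inner ℝ x ξ : ℝ) : ℂ)) * hsym β j t τ g ξ := by
  unfold Zop hsym msym
  congr 1
  funext ξ
  push_cast
  ring

lemma r_bounds_of_beta_ne {β : ℝ → ℝ} (hβsupp : Function.support β ⊆ Icc (1/2 : ℝ) 2)
    {j : ℤ} (hj1 : -2 ≤ j) (hj2 : j ≤ 2) {r : ℝ} (h : β (r / 2 ^ j) ≠ 0) :
    1/8 ≤ r ∧ r ≤ 8 := by
  have hmem := hβsupp h
  have h1 : (2:ℝ)^j ≤ 4 := by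
    calc (2:ℝ)^j ≤ 2^(2:ℤ) := zpow_le_zpow_right₀ one_le_two hj2
    _ = 4 := by norm_num
  have h2 : (1/4:ℝ) ≤ 2^j := by
    calc ((1:ℝ)/4) = 2^(-2:ℤ) := by norm_num [zpow_neg]
    _ ≤ 2^j := zpow_le_zpow_right₀ one_le_two hj1
  have hpow : (0:ℝ) < 2^j := by positivity
  have hd : r / 2^j * 2^j = r := div_mul_cancel₀ r hpow.ne'
  have hm1 := hmem.1
  have hm2 := hmem.2
  constructor
  · nlinarith
  · nlinarith

lemma msym_eq_zero {β : ℝ → ℝ} (hβsupp : Function.support β ⊆ Icc (1/2 : ℝ) 2)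
    {j : ℤ} (hj1 : -2 ≤ j) (hj2 : j ≤ 2) (t τ : ℝ) {r : ℝ} (hr : r < 1/8 ∨ 8 < r) :
    msym β j t τ r = 0 := by
  have hβ0 : β (r / 2 ^ j) = 0 := by
    by_contra h
    obtain ⟨ha, hb⟩ := r_bounds_of_beta_ne hβsupp hj1 hj2 h
    rcases hr with hr | hr
    · linarith
    · linarith
  unfold msym
  rw [hβ0]
  ring

lemma abs_bFun_le {r : ℝ} (hr : 1/8 ≤ r) (t : ℝ) : |bFun r t| ≤ 10 := by
  have h3 : (1.6:ℝ) ≤ Real.sqrt 3 := by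
    rw [show (1.6:ℝ) = Real.sqrt (1.6^2) from (Real.sqrt_sq (by norm_num)).symm]
    exact Real.sqrt_le_sqrt (by norm_num)
  have hd : (1/10:ℝ) ≤ Real.sqrt 3 / 2 * r := by nlinarith
  have hd0 : (0:ℝ) < Real.sqrt 3 / 2 * r := lt_of_lt_of_le (by norm_num) hd
  rw [bFun, abs_div, abs_of_pos hd0]
  calc |Real.sin (Real.sqrt 3 / 2 * r * t)| / (Real.sqrt 3 / 2 * r)
      ≤ 1 / (1/10 : ℝ) := by
        apply div_le_div₀ (by norm_num) (Real.abs_sin_le_one _) (by norm_num) hd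
    _ = 10 := by norm_num

lemma msym_bound {β : ℝ → ℝ} (hβ01 : ∀ x, 0 ≤ β x ∧ β x ≤ 1)
    (hβsupp : Function.support β ⊆ Icc (1/2 : ℝ) 2)
    {j : ℤ} (hj1 : -2 ≤ j) (hj2 : j ≤ 2) {t τ : ℝ} (ht : 0 ≤ t) (hτ : 0 ≤ τ) (r : ℝ) :
    |msym β j t τ r| ≤ 100 * Real.exp (-(t+τ)/16) := by
  by_cases hβ0 : β (r / 2 ^ j) = 0
  · unfold msym
    rw [hβ0]
    simp
    positivity
  · obtain ⟨hra, hrb⟩ := r_bounds_of_beta_ne hβsupp hj1 hj2 hβ0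
    have he : Real.exp (-(r * (t+τ))/2) ≤ Real.exp (-(t+τ)/16) := by
      apply Real.exp_le_exp.2
      nlinarith
    have hb1 := abs_bFun_le hra t
    have hb2 := abs_bFun_le hra τ
    have hβb : |β (r/2^j)^2| ≤ 1 := by
      obtain ⟨h01, h02⟩ := hβ01 (r/2^j)
      rw [abs_of_nonneg (by positivity)]
      nlinarith
    have hE0 : (0:ℝ) ≤ Real.exp (-(t+τ)/16) := (Real.exp_pos _).le
    unfold msym
    rw [abs_mul, abs_mul, abs_mul, abs_of_pos (Real.exp_pos _)]
    calc Real.exp (-(r*(t+τ))/2) * |bFun r t| * |bFun r τ| * |β (r/2^j)^2|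
        ≤ Real.exp (-(t+τ)/16) * 10 * 10 * 1 := by
          apply mul_le_mul _ hβb (abs_nonneg _) (by positivity)
          apply mul_le_mul _ hb2 (abs_nonneg _) (by positivity)
          exact mul_le_mul he hb1 (abs_nonneg _) hE0
      _ = 100 * Real.exp (-(t+τ)/16) := by ring

lemma hsym_bound {β : ℝ → ℝ} (hβ01 : ∀ x, 0 ≤ β x ∧ β x ≤ 1)
    (hβsupp : Function.support β ⊆ Icc (1/2 : ℝ) 2)
    {j : ℤ} (hj1 : -2 ≤ j) (hj2 : j ≤ 2) {t τ : ℝ} (ht : 0 ≤ t) (hτ : 0 ≤ τ)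
    (g : Eu n → ℂ) (ξ : Eu n) :
    ‖hsym β j t τ g ξ‖ ≤ 100 * Real.exp (-(t+τ)/16) * ∫ x, ‖g x‖ := by
  have hgn : (0:ℝ) ≤ ∫ x : Eu n, ‖g x‖ := integral_nonneg fun x => norm_nonneg _
  rw [hsym, norm_mul, Complex.norm_real]
  exact mul_le_mul (msym_bound hβ01 hβsupp hj1 hj2 ht hτ _) (norm_FT_le g ξ)
    (norm_nonneg _) (by positivity)

lemma hsym_zero {β : ℝ → ℝ} (hβsupp : Function.support β ⊆ Icc (1/2 : ℝ) 2)
    {j : ℤ} (hj1 : -2 ≤ j) (hj2 : j ≤ 2) (t τ : ℝ) (g : Eu n → ℂ) {ξ : Eu n}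
    (hξ : 8 < ‖ξ‖) : hsym β j t τ g ξ = 0 := by
  rw [hsym, msym_eq_zero hβsupp hj1 hj2 t τ (Or.inr hξ)]
  simp

lemma continuous_msym {β : ℝ → ℝ} (hβ : Continuous β)
    (hβsupp : Function.support β ⊆ Icc (1/2 : ℝ) 2) (j : ℤ) (t τ : ℝ) :
    Continuous (msym β j t τ) := by
  rw [continuous_iff_continuousAt]
  intro r
  rcases lt_or_ge r ((2:ℝ)^(j-1)) with hr | hr
  · have hz : (fun s => msym β j t τ s) =ᶠ[nhds r] (fun _ => (0:ℝ)) := by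
      filter_upwards [Iio_mem_nhds hr] with s hs
      have hβ0 : β (s / 2 ^ j) = 0 := by
        by_contra h
        have hmem := hβsupp h
        have hpow : (0:ℝ) < 2^j := by positivity
        have hd : s / 2^j * 2^j = s := div_mul_cancel₀ s hpow.ne'
        have h1 := hmem.1
        have hlow : (2:ℝ)^(j-1) ≤ s := by
          have : (2:ℝ)^(j-1) = 2^j / 2 := by
            rw [zpow_sub₀ (by norm_num : (2:ℝ) ≠ 0)]
            norm_num
          rw [this]
          nlinarith
        exact absurd hs (not_lt.2 hlow)
      unfold msym
      rw [hβ0]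
      ring
    exact ContinuousAt.congr continuousAt_const hz.symm
  · have hr0 : (0:ℝ) < r := lt_of_lt_of_le (by positivity) hr
    have hden : Real.sqrt 3 / 2 * r ≠ 0 := by
      have h3 : (0:ℝ) < Real.sqrt 3 := Real.sqrt_pos.2 (by norm_num)
      positivity
    unfold msym bFun
    apply ContinuousAt.mul
    apply ContinuousAt.mul
    apply ContinuousAt.mul
    · exact (Real.continuous_exp.comp (by fun_prop)).continuousAt
    · exact ContinuousAt.div (by fun_prop) (by fun_prop) hden
    · exact ContinuousAt.div (by fun_prop) (by fun_prop) hden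
    · exact (((hβ.comp (by fun_prop)).pow 2).continuousAt)

lemma continuous_hsym {β : ℝ → ℝ} (hβ : Continuous β)
    (hβsupp : Function.support β ⊆ Icc (1/2 : ℝ) 2) (j : ℤ) (t τ : ℝ)
    {g : Eu n → ℂ} (hg : Integrable g) : Continuous (hsym β j t τ g) := by
  unfold hsym
  exact (Complex.continuous_ofReal.comp
    ((continuous_msym hβ hβsupp j t τ).comp continuous_norm)).mul (continuous_FT hg)

end AuxZop

section AuxZop2

open scoped FourierTransform RealInnerProductSpace
open Filter

variable {n : ℕ}

lemma hsym_hcs {β : ℝ → ℝ} (hβsupp : Function.support β ⊆ Icc (1/2 : ℝ) 2)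
    {j : ℤ} (hj1 : -2 ≤ j) (hj2 : j ≤ 2) (t τ : ℝ) (g : Eu n → ℂ) :
    HasCompactSupport (hsym β j t τ g) := by
  apply HasCompactSupport.intro (isCompact_closedBall (0 : Eu n) 8)
  intro ξ hξ
  apply hsym_zero hβsupp hj1 hj2 t τ g
  simpa [Metric.mem_closedBall, dist_zero_right, not_le] using hξ

lemma FT_Zop {β : ℝ → ℝ} (hβ : Continuous β)
    (hβsupp : Function.support β ⊆ Icc (1/2 : ℝ) 2)
    {j : ℤ} (hj1 : -2 ≤ j) (hj2 : j ≤ 2) (t τ : ℝ) {g : Eu n → ℂ} (hg : Integrable g)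
    (hZ : Integrable (Zop β j t τ g)) (ξ : Eu n) :
    FT (Zop β j t τ g) ξ = (((2 * Real.pi) ^ n : ℝ) : ℂ) * hsym β j t τ g ξ := by
  have hc0 : (0:ℝ) < 2 * Real.pi := by positivity
  set h₂ : Eu n → ℂ := fun η => hsym β j t τ g ((2 * Real.pi) • η) with hh₂
  -- Step 1 : Zop = (2π)^n • 𝓕⁻ h₂
  have hZeq : Zop β j t τ g
      = fun x => (((2 * Real.pi) ^ n : ℝ)) • 𝓕⁻ h₂ x := by
    funext x
    rw [Zop_eq, Real.fourierInv_eq']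
    have hcv := MeasureTheory.Measure.integral_comp_smul (volume : Measure (Eu n))
      (fun ζ : Eu n => Complex.exp (Complex.I * ((inner ℝ x ζ : ℝ) : ℂ)) * hsym β j t τ g ζ)
      (2 * Real.pi)
    rw [finrank_euclideanSpace_fin] at hcv
    have habs : |(((2 * Real.pi) ^ n : ℝ))⁻¹| = (((2 * Real.pi) ^ n : ℝ))⁻¹ :=
      abs_of_pos (by positivity)
    rw [habs] at hcv
    have h1 : (∫ ζ : Eu n, Complex.exp (Complex.I * ((inner ℝ x ζ : ℝ) : ℂ)) * hsym β j t τ g ζ)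
        = ((2 * Real.pi) ^ n : ℝ) •
          ∫ η : Eu n, Complex.exp (Complex.I * ((inner ℝ x ((2 * Real.pi) • η) : ℝ) : ℂ))
            * hsym β j t τ g ((2 * Real.pi) • η) := by
      rw [hcv, smul_smul, mul_inv_cancel₀ (by positivity : ((2 * Real.pi) ^ n : ℝ) ≠ 0), one_smul]
    rw [h1]
    congr 1
    refine integral_congr_ae (Filter.Eventually.of_forall fun η => ?_)
    simp only [hh₂, smul_eq_mul]
    have hinner : (inner ℝ x ((2 * Real.pi) • η) : ℝ) = 2 * Real.pi * (inner ℝ η x : ℝ) := by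
      rw [real_inner_smul_right, real_inner_comm]
    rw [hinner]
    congr 1
    push_cast
    ring
  -- Step 2 : properties of h₂
  have hcont : Continuous (hsym β j t τ g) := continuous_hsym hβ hβsupp j t τ hg
  have hcont₂ : Continuous h₂ := hcont.comp (continuous_const_smul _)
  have hhcs₂ : HasCompactSupport h₂ := by
    apply HasCompactSupport.intro (isCompact_closedBall (0 : Eu n) 8)
    intro η hη
    have hη' : 8 < ‖η‖ := by
      simpa [Metric.mem_closedBall, dist_zero_right, not_le] using hη
    apply hsym_zero hβsupp hj1 hj2 t τ g
    rw [norm_smul, Real.norm_eq_abs, abs_of_pos hc0]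
    nlinarith [Real.pi_gt_three]
  have hint₂ : Integrable h₂ := hcont₂.integrable_of_hasCompactSupport hhcs₂
  have hinv_eq : 𝓕⁻ h₂
      = fun x => (((2 * Real.pi) ^ n : ℝ))⁻¹ • Zop β j t τ g x := by
    funext x
    rw [hZeq, smul_smul, inv_mul_cancel₀ (by positivity : ((2 * Real.pi) ^ n : ℝ) ≠ 0), one_smul]
  have hFint : Integrable (𝓕 h₂) := by
    have he : 𝓕 h₂ = fun w => 𝓕⁻ h₂ (-w) := by
      funext w
      rw [Real.fourierInv_eq_fourier_neg, neg_neg]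
    rw [he, hinv_eq]
    exact (hZ.smul (((2 * Real.pi) ^ n : ℝ))⁻¹).comp_neg
  -- Step 3 : inversion
  have hinvf : ∀ w, 𝓕 (𝓕⁻ h₂) w = h₂ w := fun w =>
    hint₂.fourier_fourierInv_eq hFint hcont₂.continuousAt
  -- Step 4
  rw [FT_eq_fourierIntegral, hZeq]
  have hsmul : 𝓕 (fun x : Eu n => ((((2 * Real.pi) ^ n : ℝ)) • (𝓕⁻ h₂ : Eu n → ℂ) x : ℂ)) ((2 * Real.pi)⁻¹ • ξ)
      = (((2 * Real.pi) ^ n : ℝ)) • 𝓕 (𝓕⁻ h₂ : Eu n → ℂ) ((2 * Real.pi)⁻¹ • ξ) := by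
    rw [Real.fourier_eq', Real.fourier_eq', ← integral_smul]
    congr 1
    funext v
    rw [smul_comm]
  rw [hsmul, hinvf]
  have h3 : h₂ ((2 * Real.pi)⁻¹ • ξ) = hsym β j t τ g ξ := by
    rw [hh₂]
    simp only
    rw [smul_smul, mul_inv_cancel₀ hc0.ne', one_smul]
  rw [h3, Complex.real_smul]

lemma exists_rpow_exp_bound (σ : ℝ) :
    ∃ M > (0:ℝ), ∀ s : ℝ, 0 ≤ s → (1+s)^σ * Real.exp (-s/16) ≤ M := by
  obtain ⟨S, hS⟩ := Filter.eventually_atTop.1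
    ((tendsto_rpow_mul_exp_neg_mul_atTop_nhds_zero σ (1/16) (by norm_num)).eventually
      (gt_mem_nhds one_pos))
  have hcont : ContinuousOn (fun x : ℝ => x^σ * Real.exp (-(1/16)*x)) (Icc 1 (max S 1)) := by
    apply ContinuousOn.mul
    · intro x hx
      exact (Real.continuousAt_rpow_const x σ (Or.inl (by linarith [hx.1]))).continuousWithinAt
    · exact (Real.continuous_exp.comp (by fun_prop)).continuousOn
  obtain ⟨CC, hCC⟩ := (isCompact_Icc).exists_bound_of_continuousOn hcont
  refine ⟨(max CC 1) * Real.exp (1/16), by positivity, ?_⟩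
  intro s hs
  have hkey : (1+s)^σ * Real.exp (-(1/16)*(1+s)) ≤ max CC 1 := by
    rcases le_or_gt S (1+s) with h | h
    · exact le_trans (hS _ h).le (le_max_right _ _)
    · have hmem : (1+s) ∈ Icc (1:ℝ) (max S 1) := ⟨by linarith, le_max_of_le_left h.le⟩
      have := hCC _ hmem
      rw [Real.norm_eq_abs] at this
      exact le_trans (le_trans (le_abs_self _) this) (le_max_left _ _)
  have hsplit : Real.exp (-s/16) = Real.exp (-(1/16)*(1+s)) * Real.exp (1/16) := by
    rw [← Real.exp_add]
    congr 1
    ring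
  rw [hsplit, ← mul_assoc]
  exact mul_le_mul_of_nonneg_right hkey (Real.exp_pos _).le

end AuxZop2

/-- Dispersive decay estimates for the sine-type frequency-localized propagator. -/
theorem Zop_dispersive_estimates
    (n : ℕ) (hn : 1 ≤ n) (β : ℝ → ℝ) (hβs : ContDiff ℝ (⊤ : ℕ∞) β)
    (hβ01 : ∀ x, 0 ≤ β x ∧ β x ≤ 1)
    (hβsupp : Function.support β ⊆ Icc (1/2 : ℝ) 2) :
    (∀ k : ℕ, (n : ℝ) / 2 < (k : ℝ) →
      ∃ C > 0, ∀ j : ℤ, -2 ≤ j → j ≤ 2 → ∀ t τ : ℝ, 0 ≤ t → 0 ≤ τ →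
        ∀ g : Eu n → ℂ, Integrable g →
          sobNorm n k (Zop β j t τ g)
            ≤ C * Real.exp (-(t + τ) / 16) * ∫ x : Eu n, ‖g x‖) ∧
    (∀ σ : ℝ, 0 < σ →
      ∃ C > 0, ∀ j : ℤ, -2 ≤ j → j ≤ 2 → ∀ t τ : ℝ, 0 ≤ t → 0 ≤ τ →
        ∀ g : Eu n → ℂ, Integrable g →
          eLpNorm (Zop β j t τ g) ∞ volume
            ≤ ENNReal.ofReal (C * (1 + |t - τ|) ^ (-σ) * ∫ x : Eu n, ‖g x‖)) := by
  classical
  have hβc : Continuous β := hβs.continuous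
  have hV0 : (0:ℝ) ≤ (volume (Metric.closedBall (0:Eu n) 8)).toReal := ENNReal.toReal_nonneg
  set V : ℝ := (volume (Metric.closedBall (0:Eu n) 8)).toReal with hVdef
  constructor
  · -- Sobolev estimate
    intro k hk
    refine ⟨100 * Real.sqrt ((2*Real.pi)^n * (65:ℝ)^(k:ℝ) * V) + 1, by positivity, ?_⟩
    intro j hj1 hj2 t τ ht hτ g hg
    have hint_norm : (0:ℝ) ≤ ∫ x : Eu n, ‖g x‖ := integral_nonneg fun x => norm_nonneg _
    have hE0 : (0:ℝ) < Real.exp (-(t+τ)/16) := Real.exp_pos _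
    set B : ℝ := 100 * Real.exp (-(t+τ)/16) * ∫ x : Eu n, ‖g x‖ with hB
    have hB0 : (0:ℝ) ≤ B := by
      rw [hB]
      exact mul_nonneg (mul_nonneg (by norm_num) hE0.le) hint_norm
    have hsqrt0 : (0:ℝ) ≤ Real.sqrt ((2*Real.pi)^n * (65:ℝ)^(k:ℝ) * V) := Real.sqrt_nonneg _
    by_cases hZ : Integrable (Zop β j t τ g)
    · -- integrable case : use the Fourier inversion identity
      have hFT := FT_Zop hβc hβsupp hj1 hj2 t τ hg hZ
      have hhb : ∀ ξ : Eu n, ‖hsym β j t τ g ξ‖ ≤ B := fun ξ =>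
        hsym_bound hβ01 hβsupp hj1 hj2 ht hτ g ξ
      have hkey : sobNormSq n k (Zop β j t τ g) ≤ ((2*Real.pi)^n * (65:ℝ)^(k:ℝ) * V) * B^2 := by
        have hmono : (∫ ξ : Eu n, (1+‖ξ‖^2)^(k:ℝ) * ‖FT (Zop β j t τ g) ξ‖^2)
            ≤ ∫ ξ : Eu n, (Metric.closedBall (0:Eu n) 8).indicator
                (fun _ => (65:ℝ)^(k:ℝ) * ((2*Real.pi)^n * B)^2) ξ := by
          apply integral_mono_of_nonneg
          · exact Filter.Eventually.of_forall fun ξ => by positivity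
          · rw [integrable_indicator_iff measurableSet_closedBall]
            exact integrableOn_const measure_closedBall_lt_top.ne
          · apply Filter.Eventually.of_forall
            intro ξ
            simp only
            by_cases hξ : ‖ξ‖ ≤ 8
            · rw [Set.indicator_of_mem (by simpa [Metric.mem_closedBall, dist_zero_right] using hξ)]
              have h1 : (1+‖ξ‖^2)^(k:ℝ) ≤ (65:ℝ)^(k:ℝ) :=
                Real.rpow_le_rpow (by positivity) (by nlinarith [norm_nonneg ξ]) (Nat.cast_nonneg k)
              have h2 : ‖FT (Zop β j t τ g) ξ‖ ≤ (2*Real.pi)^n * B := by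
                rw [hFT ξ, norm_mul, Complex.norm_real, Real.norm_eq_abs,
                  abs_of_pos (by positivity : (0:ℝ) < (2*Real.pi)^n)]
                exact mul_le_mul_of_nonneg_left (hhb ξ) (by positivity)
              have h2' : ‖FT (Zop β j t τ g) ξ‖^2 ≤ ((2*Real.pi)^n * B)^2 :=
                pow_le_pow_left₀ (norm_nonneg _) h2 2
              exact mul_le_mul h1 h2' (by positivity) (by positivity)
            · rw [Set.indicator_of_notMem (by simpa [Metric.mem_closedBall, dist_zero_right] using hξ)]
              have h0 : hsym β j t τ g ξ = 0 := hsym_zero hβsupp hj1 hj2 t τ g (lt_of_not_ge hξ)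
              rw [hFT ξ, h0, mul_zero]
              simp
        rw [integral_indicator_const _ measurableSet_closedBall, smul_eq_mul] at hmono
        unfold sobNormSq
        calc ((2*Real.pi)^n)⁻¹ * ∫ ξ : Eu n, (1+‖ξ‖^2)^(k:ℝ) * ‖FT (Zop β j t τ g) ξ‖^2
            ≤ ((2*Real.pi)^n)⁻¹ * (V * ((65:ℝ)^(k:ℝ) * ((2*Real.pi)^n * B)^2)) :=
              mul_le_mul_of_nonneg_left hmono (by positivity)
          _ = ((2*Real.pi)^n * (65:ℝ)^(k:ℝ) * V) * B^2 := by
              have hp : ((2*Real.pi)^n : ℝ) ≠ 0 := by positivity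
              field_simp
      have hs1 : sobNorm n k (Zop β j t τ g)
          ≤ Real.sqrt (((2*Real.pi)^n * (65:ℝ)^(k:ℝ) * V) * B^2) := by
        rw [sobNorm]
        exact Real.sqrt_le_sqrt hkey
      rw [Real.sqrt_mul (mul_nonneg (by positivity) hV0), Real.sqrt_sq hB0] at hs1
      calc sobNorm n k (Zop β j t τ g)
          ≤ Real.sqrt ((2*Real.pi)^n * (65:ℝ)^(k:ℝ) * V) * B := hs1
        _ = (100 * Real.sqrt ((2*Real.pi)^n * (65:ℝ)^(k:ℝ) * V)) * Real.exp (-(t+τ)/16)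
              * ∫ x : Eu n, ‖g x‖ := by rw [hB]; ring
        _ ≤ (100 * Real.sqrt ((2*Real.pi)^n * (65:ℝ)^(k:ℝ) * V) + 1) * Real.exp (-(t+τ)/16)
              * ∫ x : Eu n, ‖g x‖ := by
            apply mul_le_mul_of_nonneg_right _ hint_norm
            apply mul_le_mul_of_nonneg_right _ hE0.le
            linarith
    · -- non-integrable case : `FT` vanishes identically
      have hFT0 : ∀ ξ : Eu n, FT (Zop β j t τ g) ξ = 0 := by
        intro ξ
        unfold FT
        apply integral_undef
        intro hcon
        apply hZ
        have hre : Zop β j t τ g = fun x => Complex.exp (Complex.I * ((inner ℝ x ξ : ℝ):ℂ)) *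
            (Complex.exp (-Complex.I * ((inner ℝ x ξ : ℝ):ℂ)) * Zop β j t τ g x) := by
          funext x
          rw [← mul_assoc, ← Complex.exp_add]
          have h0 : Complex.I * ((inner ℝ x ξ : ℝ):ℂ) + -Complex.I * ((inner ℝ x ξ : ℝ):ℂ) = 0 := by
            ring
          rw [h0, Complex.exp_zero, one_mul]
        rw [hre]
        apply hcon.bdd_mul (c := 1)
        · apply Continuous.aestronglyMeasurable
          exact Complex.continuous_exp.comp
            (continuous_const.mul (Complex.continuous_ofReal.comp
              (continuous_id.inner continuous_const)))
        · exact Filter.Eventually.of_forall fun x => by simp [Complex.norm_exp]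
      have hzero : ∫ ξ : Eu n, (1+‖ξ‖^2)^(k:ℝ) * ‖FT (Zop β j t τ g) ξ‖^2
          = ∫ _ξ : Eu n, (0:ℝ) :=
        integral_congr_ae (Filter.Eventually.of_forall fun ξ => by simp [hFT0])
      have hsq : sobNormSq n k (Zop β j t τ g) = 0 := by
        unfold sobNormSq
        rw [hzero, integral_zero, mul_zero]
      rw [sobNorm, hsq, Real.sqrt_zero]
      have hC0 : (0:ℝ) ≤ 100 * Real.sqrt ((2*Real.pi)^n * (65:ℝ)^(k:ℝ) * V) + 1 := by positivity
      exact mul_nonneg (mul_nonneg hC0 hE0.le) hint_norm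
  · -- L^∞ estimate
    intro σ hσ
    obtain ⟨M, hM0, hM⟩ := exists_rpow_exp_bound σ
    refine ⟨100 * V * M + 1, by nlinarith, ?_⟩
    intro j hj1 hj2 t τ ht hτ g hg
    have hint_norm : (0:ℝ) ≤ ∫ x : Eu n, ‖g x‖ := integral_nonneg fun x => norm_nonneg _
    have hE0 : (0:ℝ) < Real.exp (-(t+τ)/16) := Real.exp_pos _
    set B : ℝ := 100 * Real.exp (-(t+τ)/16) * ∫ x : Eu n, ‖g x‖ with hB
    have hhb : ∀ ξ : Eu n, ‖hsym β j t τ g ξ‖ ≤ B := fun ξ =>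
      hsym_bound hβ01 hβsupp hj1 hj2 ht hτ g ξ
    have hbd : ∀ x, ‖Zop β j t τ g x‖ ≤ V * B := by
      intro x
      rw [Zop_eq]
      refine le_trans (norm_integral_le_integral_norm _) ?_
      have hmono : (∫ ξ : Eu n, ‖Complex.exp (Complex.I * ((inner ℝ x ξ : ℝ):ℂ)) * hsym β j t τ g ξ‖)
          ≤ ∫ ξ : Eu n, (Metric.closedBall (0:Eu n) 8).indicator (fun _ => B) ξ := by
        apply integral_mono_of_nonneg
        · exact Filter.Eventually.of_forall fun ξ => norm_nonneg _
        · rw [integrable_indicator_iff measurableSet_closedBall]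
          exact integrableOn_const measure_closedBall_lt_top.ne
        · apply Filter.Eventually.of_forall
          intro ξ
          simp only
          have hnorm : ‖Complex.exp (Complex.I * ((inner ℝ x ξ : ℝ):ℂ)) * hsym β j t τ g ξ‖
              = ‖hsym β j t τ g ξ‖ := by
            rw [norm_mul]
            simp [Complex.norm_exp]
          rw [hnorm]
          by_cases hξ : ‖ξ‖ ≤ 8
          · rw [Set.indicator_of_mem (by simpa [Metric.mem_closedBall, dist_zero_right] using hξ)]
            exact hhb ξ
          · rw [Set.indicator_of_notMem (by simpa [Metric.mem_closedBall, dist_zero_right] using hξ),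
              hsym_zero hβsupp hj1 hj2 t τ g (lt_of_not_ge hξ)]
            simp
      rw [integral_indicator_const _ measurableSet_closedBall, smul_eq_mul] at hmono
      exact hmono
    rw [eLpNorm_exponent_top]
    refine le_trans (eLpNormEssSup_le_of_ae_bound (Filter.Eventually.of_forall hbd)) ?_
    apply ENNReal.ofReal_le_ofReal
    have habs : |t - τ| ≤ t + τ := abs_sub_le_iff.2 ⟨by linarith, by linarith⟩
    have hb1 : (0:ℝ) < 1 + |t - τ| := by positivity
    have hpw : (0:ℝ) < (1+|t-τ|)^(-σ) := Real.rpow_pos_of_pos hb1 _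
    have hexp_le : Real.exp (-(t+τ)/16) ≤ M * (1+|t-τ|)^(-σ) := by
      have h1 := hM (t+τ) (by linarith)
      have hb2 : (0:ℝ) < 1 + (t+τ) := by linarith
      have hp2 : (0:ℝ) < (1+(t+τ))^σ := Real.rpow_pos_of_pos hb2 σ
      have h2 : Real.exp (-(t+τ)/16) ≤ M * (1+(t+τ))^(-σ) := by
        rw [Real.rpow_neg hb2.le, mul_comm M, inv_mul_eq_div, le_div_iff₀ hp2]
        calc Real.exp (-(t+τ)/16) * (1+(t+τ))^σ
            = (1+(t+τ))^σ * Real.exp (-(t+τ)/16) := by ring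
          _ ≤ M := h1
      have h3 : (1+(t+τ))^(-σ) ≤ (1+|t-τ|)^(-σ) :=
        Real.rpow_le_rpow_of_nonpos hb1 (by linarith) (by linarith)
      calc Real.exp (-(t+τ)/16) ≤ M * (1+(t+τ))^(-σ) := h2
        _ ≤ M * (1+|t-τ|)^(-σ) := mul_le_mul_of_nonneg_left h3 hM0.le
    calc V * B = V * 100 * Real.exp (-(t+τ)/16) * ∫ x : Eu n, ‖g x‖ := by rw [hB]; ring
      _ ≤ V * 100 * (M * (1+|t-τ|)^(-σ)) * ∫ x : Eu n, ‖g x‖ := by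
          apply mul_le_mul_of_nonneg_right _ hint_norm
          exact mul_le_mul_of_nonneg_left hexp_le (mul_nonneg hV0 (by norm_num))
      _ = (100 * V * M) * (1+|t-τ|)^(-σ) * ∫ x : Eu n, ‖g x‖ := by ring
      _ ≤ (100 * V * M + 1) * (1+|t-τ|)^(-σ) * ∫ x : Eu n, ‖g x‖ := by
          apply mul_le_mul_of_nonneg_right _ hint_norm
          apply mul_le_mul_of_nonneg_right _ hpw.le
          linarith
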